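/- arXiv:math/0406362 — 4 statements merged into one kernel-verified Lean document; each statement's English description precedes it below -/
import Mathlib

section
/- Fix $T > 0$ and $\gamma \in [0,1]$. The function $\eta^{1,2}(t) = (2 - \gamma - 2\sqrt{1-\gamma})\left(\frac{t}{T}\right)^2 + 2(-1 + \sqrt{1-\gamma})\frac{t}{T} + 1$ satisfies the ODE $2 \eta'' \eta = (\eta')^2$ on $(0,T)$, together with the boundary conditions $\eta(0) = 1$ and $\eta(T) = 1 - \gamma$. -/
/-! With `s = √(1 - γ)` one has `2 - γ - 2s = (s - 1)²`, so `η` is the square `u²` of the affine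
function `u(t) = 1 + (s - 1) t / T`, with `u(0) = 1` and `u(T) = s`. Any square of an affine function
`u` solves the ODE, since `η' = 2 u u'` and `η'' = 2 u'²` give `2 η'' η = 4 u'² u² = (η')²`. -/

section AffineSq

variable {𝕜 : Type*} [NontriviallyNormedField 𝕜] (a b : 𝕜)

theorem deriv_affine_sq : deriv (fun x => (a * x + b) ^ 2) = fun x => 2 * a * (a * x + b) := by
  funext x
  have h := ((hasDerivAt_id' x).const_mul a |>.add_const b).fun_pow 2
  rw [h.deriv]
  ring

theorem deriv_deriv_affine_sq : deriv (deriv fun x => (a * x + b) ^ 2) = fun _ => 2 * a ^ 2 := by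
  funext x
  have h := (((hasDerivAt_id' x).const_mul a).add_const b).const_mul (2 * a)
  rw [deriv_affine_sq, h.deriv]
  ring

theorem affine_sq_ode (t : 𝕜) :
    2 * deriv (deriv fun x => (a * x + b) ^ 2) t * (a * t + b) ^ 2 =
      deriv (fun x => (a * x + b) ^ 2) t ^ 2 := by
  rw [deriv_deriv_affine_sq, deriv_affine_sq]
  ring

end AffineSq

/-- The function `η^{1,2}(t) = (2-γ-2√(1-γ))(t/T)² + 2(-1+√(1-γ))(t/T) + 1` satisfies
the ODE `2 η'' η = (η')²` on `(0,T)` with boundary conditions `η(0) = 1`,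
`η(T) = 1 - γ`. -/
theorem stmt_5 (T γ : ℝ) (hT : 0 < T) (hγ : γ ∈ Set.Icc (0 : ℝ) 1) :
    let η : ℝ → ℝ := fun t =>
      (2 - γ - 2 * Real.sqrt (1 - γ)) * (t / T) ^ 2 +
        2 * (-1 + Real.sqrt (1 - γ)) * (t / T) + 1
    (∀ t ∈ Set.Ioo (0 : ℝ) T, 2 * deriv (deriv η) t * η t = (deriv η t) ^ 2) ∧
      η 0 = 1 ∧ η T = 1 - γ := by
  intro η
  have hs : √(1 - γ) ^ 2 = 1 - γ := Real.sq_sqrt (by linarith [hγ.2])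
  have hη : η = fun t => ((√(1 - γ) - 1) / T * t + 1) ^ 2 := by
    funext t
    simp only [η]
    field_simp
    linear_combination (-t ^ 2) * hs
  refine ⟨fun t _ => ?_, ?_, ?_⟩
  · rw [hη]
    exact affine_sq_ode _ _ t
  · simp [hη]
  · rw [hη]
    beta_reduce
    rw [div_mul_cancel₀ _ hT.ne']
    linear_combination hs
end

section
/- For all real $z$, $p$ and all $\alpha \ge 1$, $F_a(\alpha z, \alpha p) \ge F_a(z,p)$, where $F_a(z,p) = 4p^2 + \frac{28}{15}z^2 - \frac{32}{5}z^4 + \frac{128}{15}z^6$. -/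
lemma inner_aux (β x : ℝ) (hβ : 1 ≤ β) (hx : 0 ≤ x) :
    28/15 - 32/5*(β+1)*x + 128/15*(β^2+β+1)*x^2 ≥ 0 := by
  nlinarith [sq_nonneg (4*(β+1)*x - 3/2), sq_nonneg (β-1), sq_nonneg x,
    mul_nonneg (mul_nonneg hx hx) (sq_nonneg (β-1)), sq_nonneg ((β-1)*x)]

/-- Scaling monotonicity of the amplitude Lagrangian
`F_a(z,p) = 4p² + (28/15)z² - (32/5)z⁴ + (128/15)z⁶`: for `α ≥ 1`,
`F_a(αz, αp) ≥ F_a(z,p)`. -/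
theorem stmt_9 (z p α : ℝ) (hα : 1 ≤ α) :
    4 * (α * p) ^ 2 + 28 / 15 * (α * z) ^ 2 - 32 / 5 * (α * z) ^ 4 +
        128 / 15 * (α * z) ^ 6 ≥
      4 * p ^ 2 + 28 / 15 * z ^ 2 - 32 / 5 * z ^ 4 + 128 / 15 * z ^ 6 := by
  have h1 : (0:ℝ) ≤ α^2 - 1 := by nlinarith
  have h2 := inner_aux (α^2) (z^2) (by nlinarith) (sq_nonneg z)
  nlinarith [mul_nonneg h1 (sq_nonneg p),
    mul_nonneg (mul_nonneg h1 (sq_nonneg z)) h2]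
end

section
/- Let $T > 0$, $\gamma \in [0,1]$, and let $\Phi$ be a bounded linear operator on $L^2(\mathbb{R})$ with operator norm $\|\Phi\|_c$. Suppose $u \in C([0,T]; L^2(\mathbb{R}))$ and $h \in L^2(0,T; L^2(\mathbb{R}))$ satisfy the momentum identity $\|u(t)\|_{L^2}^2 - \|u(0)\|_{L^2}^2 = 2\,\mathrm{Re}\left(-i \int_0^t (\Phi h(s), u(s))_{L^2}\, ds\right)$ for all $t \in [0,T]$ (where $(f,g)_{L^2} = \int_{\mathbb{R}} f \bar g\, dx$), together with $u(0) = 0$ and $\|u(T)\|_{L^2}^2 \ge 4(1-\gamma)$. Then $\|h\|_{L^2(0,T;L^2(\mathbb{R}))}^2 \ge \frac{1-\gamma}{T \|\Phi\|_c^2}$. -/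
/-!
Let `M` be the maximum of `‖u‖` on `[0, T]` and `H = ∫₀ᵀ ‖h‖²`. Since `u 0 = 0`, the momentum
identity gives `‖u t‖² ≤ 2 ∫₀ᵗ ‖(u, Φ h)‖`, and pointwise `‖(u s, Φ h s)‖ ≤ M ‖Φ‖ ‖h s‖ ≤
‖Φ‖² T ‖h s‖² + M² / (4T)` by Young's inequality, so `‖u t‖² ≤ 2 ‖Φ‖² T H + M² / 2`.
At a maximum point of `‖u‖` this reads `M² ≤ 4 ‖Φ‖² T H`, while `4 (1 - γ) ≤ ‖u T‖² ≤ M²`.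
Young's inequality replaces the paper's Cauchy–Schwarz in time: it bounds the integrand by a
function that is integrable by hypothesis, so no measurability of `‖h‖` or `‖u‖` is needed.
-/

open MeasureTheory

lemma mul_le_mul_sq_add_sq_div_four_mul {a b T : ℝ} (hT : 0 < T) :
    a * b ≤ T * b ^ 2 + a ^ 2 / (4 * T) := by
  have hsq : 0 ≤ (2 * T * b - a) ^ 2 / (4 * T) := by positivity
  have hexpand : (2 * T * b - a) ^ 2 / (4 * T) = T * b ^ 2 + a ^ 2 / (4 * T) - a * b := by
    field_simp
    ring
  linarith

section

variable {𝕜 E F : Type*} [RCLike 𝕜] [NormedAddCommGroup E] [InnerProductSpace 𝕜 E]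
  [NormedAddCommGroup F] [NormedSpace 𝕜 F]

lemma norm_inner_apply_le_of_norm_le {T M : ℝ} (hT : 0 < T) (Φ : F →L[𝕜] E) {v : E} (hv : ‖v‖ ≤ M)
    (w : F) : ‖(inner 𝕜 v (Φ w) : 𝕜)‖ ≤ ‖Φ‖ ^ 2 * T * ‖w‖ ^ 2 + M ^ 2 / (4 * T) :=
  calc ‖(inner 𝕜 v (Φ w) : 𝕜)‖ ≤ ‖v‖ * ‖Φ w‖ := norm_inner_le_norm _ _
    _ ≤ M * (‖Φ‖ * ‖w‖) := mul_le_mul hv (Φ.le_opNorm w) (norm_nonneg _) ((norm_nonneg v).trans hv)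
    _ ≤ T * (‖Φ‖ * ‖w‖) ^ 2 + M ^ 2 / (4 * T) := mul_le_mul_sq_add_sq_div_four_mul hT
    _ = ‖Φ‖ ^ 2 * T * ‖w‖ ^ 2 + M ^ 2 / (4 * T) := by ring

lemma integral_norm_inner_le_of_norm_le {T M t : ℝ} (hT : 0 < T) (ht : t ∈ Set.Icc 0 T)
    (Φ : F →L[𝕜] E) {u : ℝ → E} {h : ℝ → F} (hM : ∀ s ∈ Set.Icc 0 T, ‖u s‖ ≤ M)
    (hh : IntervalIntegrable (fun s => ‖h s‖ ^ 2) volume 0 T)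
    (hint : IntervalIntegrable (fun s => (inner 𝕜 (u s) (Φ (h s)) : 𝕜)) volume 0 t) :
    ∫ s in (0 : ℝ)..t, ‖(inner 𝕜 (u s) (Φ (h s)) : 𝕜)‖ ≤
      ‖Φ‖ ^ 2 * T * (∫ s in (0 : ℝ)..T, ‖h s‖ ^ 2) + M ^ 2 / 4 := by
  set g : ℝ → ℝ := fun s => ‖Φ‖ ^ 2 * T * ‖h s‖ ^ 2 + M ^ 2 / (4 * T)
  have hg : IntervalIntegrable g volume 0 T := (hh.const_mul _).add intervalIntegrable_const
  have hg_nonneg : ∀ s, 0 ≤ g s := fun s => by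
    have : 0 ≤ M := (norm_nonneg _).trans (hM 0 ⟨le_rfl, hT.le⟩)
    positivity
  have hsub : Set.uIcc 0 t ⊆ Set.uIcc 0 T := by
    rw [Set.uIcc_of_le ht.1, Set.uIcc_of_le hT.le]
    exact Set.Icc_subset_Icc le_rfl ht.2
  calc ∫ s in (0 : ℝ)..t, ‖(inner 𝕜 (u s) (Φ (h s)) : 𝕜)‖ ≤ ∫ s in (0 : ℝ)..t, g s :=
        intervalIntegral.integral_mono_on ht.1 hint.norm (hg.mono_set hsub) fun s hs =>
          norm_inner_apply_le_of_norm_le hT Φ (hM s ⟨hs.1, hs.2.trans ht.2⟩) (h s)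
    _ ≤ ∫ s in (0 : ℝ)..T, g s :=
        intervalIntegral.integral_mono_interval le_rfl ht.1 ht.2
          (Filter.Eventually.of_forall hg_nonneg) hg
    _ = ‖Φ‖ ^ 2 * T * (∫ s in (0 : ℝ)..T, ‖h s‖ ^ 2) + M ^ 2 / 4 := by
        rw [intervalIntegral.integral_add (hh.const_mul _) intervalIntegrable_const,
          intervalIntegral.integral_const_mul, intervalIntegral.integral_const, smul_eq_mul]
        field_simp
        ring

end

theorem stmt_10_general (T γ : ℝ) (hT : 0 < T)
    (Φ : Lp ℂ 2 (volume : Measure ℝ) →L[ℂ] Lp ℂ 2 (volume : Measure ℝ))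
    (u h : ℝ → Lp ℂ 2 (volume : Measure ℝ))
    (hu : Continuous u)
    (hh : IntervalIntegrable (fun s => ‖h s‖ ^ 2) volume 0 T)
    (hint : ∀ t ∈ Set.Icc (0 : ℝ) T,
      IntervalIntegrable (fun s => (inner ℂ (u s) (Φ (h s)) : ℂ)) volume 0 t)
    (hident : ∀ t ∈ Set.Icc (0 : ℝ) T,
      ‖u t‖ ^ 2 - ‖u 0‖ ^ 2 =
        2 * ((-Complex.I) * ∫ s in (0 : ℝ)..t, (inner ℂ (u s) (Φ (h s)) : ℂ)).re)
    (hu0 : u 0 = 0) (huT : 4 * (1 - γ) ≤ ‖u T‖ ^ 2) :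
    (1 - γ) / (T * ‖Φ‖ ^ 2) ≤ ∫ s in (0 : ℝ)..T, ‖h s‖ ^ 2 := by
  obtain ⟨t₀, ht₀, hmax⟩ :=
    isCompact_Icc.exists_isMaxOn (Set.nonempty_Icc.2 hT.le) hu.norm.continuousOn
  have hmomentum : ‖u t₀‖ ^ 2 ≤
      2 * ∫ s in (0 : ℝ)..t₀, ‖(inner ℂ (u s) (Φ (h s)) : ℂ)‖ := by
    have hre := Complex.re_le_norm
      ((-Complex.I) * ∫ s in (0 : ℝ)..t₀, (inner ℂ (u s) (Φ (h s)) : ℂ))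
    rw [norm_mul, norm_neg, Complex.norm_I, one_mul] at hre
    have hident₀ := hident t₀ ht₀
    rw [hu0, norm_zero] at hident₀
    linarith [intervalIntegral.norm_integral_le_integral_norm (μ := volume) ht₀.1
      (f := fun s => (inner ℂ (u s) (Φ (h s)) : ℂ))]
  have hbound :=
    integral_norm_inner_le_of_norm_le hT ht₀ Φ (fun s hs => hmax hs) hh (hint t₀ ht₀)
  have huT_le : ‖u T‖ ^ 2 ≤ ‖u t₀‖ ^ 2 :=
    pow_le_pow_left₀ (norm_nonneg _) (hmax ⟨hT.le, le_rfl⟩) 2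
  refine div_le_of_le_mul₀ (by positivity)
    (intervalIntegral.integral_nonneg hT.le fun s _ => sq_nonneg _) ?_
  linarith

/-- First upper bound of Proposition 7: if `u : [0,T] → L²(ℝ)` and
`h ∈ L²(0,T;L²(ℝ))` satisfy the momentum identity
`‖u(t)‖² - ‖u(0)‖² = 2 Re(-i ∫₀ᵗ (u(s), Φh(s)) ds)`, with `u(0) = 0` and
`‖u(T)‖² ≥ 4(1-γ)`, then `‖h‖²_{L²(0,T;L²)} ≥ (1-γ)/(T‖Φ‖²)`. -/
theorem stmt_10 (T γ : ℝ) (hT : 0 < T) (hγ : γ ∈ Set.Icc (0 : ℝ) 1)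
    (Φ : Lp ℂ 2 (volume : Measure ℝ) →L[ℂ] Lp ℂ 2 (volume : Measure ℝ))
    (u h : ℝ → Lp ℂ 2 (volume : Measure ℝ))
    (hu : Continuous u)
    (hh : IntervalIntegrable (fun s => ‖h s‖ ^ 2) volume 0 T)
    (hint : ∀ t ∈ Set.Icc (0 : ℝ) T,
      IntervalIntegrable (fun s => (inner ℂ (u s) (Φ (h s)) : ℂ)) volume 0 t)
    (hident : ∀ t ∈ Set.Icc (0 : ℝ) T,
      ‖u t‖ ^ 2 - ‖u 0‖ ^ 2 =
        2 * ((-Complex.I) * ∫ s in (0 : ℝ)..t, (inner ℂ (u s) (Φ (h s)) : ℂ)).re)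
    (hu0 : u 0 = 0) (huT : 4 * (1 - γ) ≤ ‖u T‖ ^ 2) :
    (1 - γ) / (T * ‖Φ‖ ^ 2) ≤ ∫ s in (0 : ℝ)..T, ‖h s‖ ^ 2 :=
  stmt_10_general T γ hT Φ u h hu hh hint hident hu0 huT
end

section
/- Let $T > 0$, $\gamma \in [0,1]$, and let $\Phi$ be a bounded linear operator on $L^2(\mathbb{R})$ with operator norm $\|\Phi\|_c > 0$. Suppose $u \in C([0,T]; L^2(\mathbb{R}))$ and $h \in L^2(0,T;L^2(\mathbb{R}))$ satisfy $\|u(t)\|_{L^2}^2 - \|u(0)\|_{L^2}^2 = 2\,\mathrm{Re}(-i\int_0^t (\Phi h(s), u(s))_{L^2} ds)$ for all $t \in [0,T]$, with $\|u(0)\|_{L^2}^2 = 4$ and $\|u(T)\|_{L^2}^2 < 4(1-\gamma)$. Then $\|h\|_{L^2(0,T;L^2(\mathbb{R}))}^2 > \frac{2(1+\gamma)}{T\|\Phi\|_c^2}\left(\sqrt{1 + \left(\frac{\gamma}{1+\gamma}\right)^2} - 1\right). -/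
open MeasureTheory

/-!
Write `K = ‖Φ‖`, `D = ∫₀ᵀ ‖u‖ ‖h‖`, `A = ∫₀ᵀ ‖u‖²` and `H = ∫₀ᵀ ‖h‖²`. Since
`|⟪u, Φh⟫| ≤ K ‖u‖ ‖h‖`, the momentum identity gives `|‖u(t)‖² - 4| ≤ 2KD` on `[0, T]`.
At `t = T` this forces `4γ < 2KD`, and for all `t` it bounds `‖u(t)‖² ≤ 4 + 2KD`, so
`A ≤ (4 + 2KD) T`. With Cauchy–Schwarz `D² ≤ AH`, the quantity `w = 2KD` satisfies
`w² ≤ 4 T K² H (4 + w)`; as `w ↦ w² / (4 + w)` increases and `w > 4γ`, this yields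
`T K² H > γ² / (1 + γ)`, which dominates the claimed bound because `√(1 + x) ≤ 1 + x / 2`.
-/

section CauchySchwarz

variable {α : Type*} [MeasurableSpace α] {μ : Measure α}

theorem memLp_two_of_integrable_sq {f : α → ℝ} (hf₀ : 0 ≤ f)
    (hf : Integrable (fun x => f x ^ 2) μ) : MemLp f 2 μ := by
  have hmeas : AEStronglyMeasurable f μ := by
    have hsqrt := Real.continuous_sqrt.comp_aestronglyMeasurable hf.aestronglyMeasurable
    simpa only [Function.comp_def, Real.sqrt_sq (hf₀ _)] using hsqrt
  exact (memLp_two_iff_integrable_sq hmeas).2 hf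

theorem sq_integral_mul_le_integral_sq_mul_integral_sq {f g : α → ℝ}
    (hf : MemLp f 2 μ) (hg : MemLp g 2 μ) :
    (∫ x, f x * g x ∂μ) ^ 2 ≤ (∫ x, f x ^ 2 ∂μ) * ∫ x, g x ^ 2 ∂μ := by
  have hf2 := hf.integrable_sq
  have hg2 := hg.integrable_sq
  have hfg : Integrable (fun x => f x * g x) μ := hf.integrable_mul hg
  -- `t ↦ ∫ (t f - g)²` is a nonnegative quadratic polynomial, so its discriminant is `≤ 0`.
  have hquad : ∀ t : ℝ, 0 ≤ (∫ x, f x ^ 2 ∂μ) * (t * t) + (-2 * ∫ x, f x * g x ∂μ) * t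
      + ∫ x, g x ^ 2 ∂μ := by
    intro t
    have hexpand : ∫ x, (t * f x - g x) ^ 2 ∂μ = (∫ x, f x ^ 2 ∂μ) * (t * t)
        + (-2 * ∫ x, f x * g x ∂μ) * t + ∫ x, g x ^ 2 ∂μ := by
      have hpt : (fun x => (t * f x - g x) ^ 2)
          = fun x => (t * t) * f x ^ 2 + (-2 * t) * (f x * g x) + g x ^ 2 := by
        funext x; ring
      have hfirst : Integrable (fun x => (t * t) * f x ^ 2 + (-2 * t) * (f x * g x)) μ :=
        (hf2.const_mul _).add (hfg.const_mul _)
      rw [hpt, integral_add hfirst hg2,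
        integral_add (hf2.const_mul _) (hfg.const_mul _), integral_const_mul,
        integral_const_mul]
      ring
    exact hexpand ▸ integral_nonneg fun _ => sq_nonneg _
  have hdisc := discrim_le_zero hquad
  rw [discrim] at hdisc
  nlinarith [hdisc]

end CauchySchwarz

section Interval

variable {f g : ℝ → ℝ} {a b : ℝ}

theorem IntervalIntegrable.mul_of_integrable_sq (hab : a ≤ b) (hf₀ : 0 ≤ f) (hg₀ : 0 ≤ g)
    (hf : IntervalIntegrable (fun x => f x ^ 2) volume a b)
    (hg : IntervalIntegrable (fun x => g x ^ 2) volume a b) :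
    IntervalIntegrable (fun x => f x * g x) volume a b :=
  (intervalIntegrable_iff_integrableOn_Ioc_of_le hab).2 <|
    (memLp_two_of_integrable_sq hf₀ hf.1).integrable_mul (memLp_two_of_integrable_sq hg₀ hg.1)

theorem sq_intervalIntegral_mul_le (hab : a ≤ b) (hf₀ : 0 ≤ f) (hg₀ : 0 ≤ g)
    (hf : IntervalIntegrable (fun x => f x ^ 2) volume a b)
    (hg : IntervalIntegrable (fun x => g x ^ 2) volume a b) :
    (∫ x in a..b, f x * g x) ^ 2 ≤ (∫ x in a..b, f x ^ 2) * ∫ x in a..b, g x ^ 2 := by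
  simpa only [intervalIntegral.integral_of_le hab] using
    sq_integral_mul_le_integral_sq_mul_integral_sq (memLp_two_of_integrable_sq hf₀ hf.1)
      (memLp_two_of_integrable_sq hg₀ hg.1)

end Interval

theorem norm_intervalIntegral_inner_le {𝕜 E F : Type*} [RCLike 𝕜]
    [NormedAddCommGroup E] [InnerProductSpace 𝕜 E] [NormedAddCommGroup F] [NormedSpace 𝕜 F]
    (Φ : F →L[𝕜] E) (u : ℝ → E) (h : ℝ → F) {a t b : ℝ} (hat : a ≤ t) (htb : t ≤ b)
    (huh : IntervalIntegrable (fun s => ‖u s‖ * ‖h s‖) volume a b) :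
    ‖∫ s in a..t, inner 𝕜 (u s) (Φ (h s))‖ ≤ ‖Φ‖ * ∫ s in a..b, ‖u s‖ * ‖h s‖ := by
  have hpoint : ∀ s, ‖inner 𝕜 (u s) (Φ (h s))‖ ≤ ‖Φ‖ * (‖u s‖ * ‖h s‖) := fun s =>
    calc ‖inner 𝕜 (u s) (Φ (h s))‖ ≤ ‖u s‖ * ‖Φ (h s)‖ := norm_inner_le_norm _ _
      _ ≤ ‖u s‖ * (‖Φ‖ * ‖h s‖) := by gcongr; exact Φ.le_opNorm _
      _ = ‖Φ‖ * (‖u s‖ * ‖h s‖) := by ring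
  have hbound := huh.const_mul ‖Φ‖
  calc ‖∫ s in a..t, inner 𝕜 (u s) (Φ (h s))‖
      ≤ ∫ s in a..t, ‖Φ‖ * (‖u s‖ * ‖h s‖) :=
        intervalIntegral.norm_integral_le_of_norm_le hat (.of_forall fun s _ => hpoint s)
          (hbound.mono_set (by
            rw [Set.uIcc_of_le hat, Set.uIcc_of_le (hat.trans htb)]
            exact Set.Icc_subset_Icc le_rfl htb))
    _ ≤ ∫ s in a..b, ‖Φ‖ * (‖u s‖ * ‖h s‖) :=
        intervalIntegral.integral_mono_interval le_rfl hat htb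
          (.of_forall fun s => by positivity) hbound
    _ = ‖Φ‖ * ∫ s in a..b, ‖u s‖ * ‖h s‖ := intervalIntegral.integral_const_mul _ _

theorem sq_div_one_add_lt_of_sq_le {γ w y : ℝ} (hγ : 0 ≤ γ) (hw : 4 * γ < w)
    (hwy : w ^ 2 ≤ 4 * y * (4 + w)) : γ ^ 2 / (1 + γ) < y := by
  rw [div_lt_iff₀ (by linarith)]
  -- `(4γ)² (4 + w) < w² (4 + 4γ)` since `w ↦ w² / (4 + w)` is increasing.
  have hmono : (4 * γ) ^ 2 * (4 + w) < w ^ 2 * (4 + 4 * γ) := by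
    nlinarith [mul_pos (sub_pos.2 hw) (by nlinarith : 0 < 4 * (w + 4 * γ) + w * (4 * γ))]
  nlinarith

theorem two_mul_one_add_mul_sqrt_sub_one_le {γ : ℝ} (hγ : 0 ≤ γ) :
    2 * (1 + γ) * (Real.sqrt (1 + (γ / (1 + γ)) ^ 2) - 1) ≤ γ ^ 2 / (1 + γ) := by
  have hsqrt := Real.sqrt_one_add_le (x := (γ / (1 + γ)) ^ 2)
    (by linarith [sq_nonneg (γ / (1 + γ))])
  calc 2 * (1 + γ) * (Real.sqrt (1 + (γ / (1 + γ)) ^ 2) - 1)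
      ≤ 2 * (1 + γ) * ((γ / (1 + γ)) ^ 2 / 2) := by gcongr; linarith
    _ = γ ^ 2 / (1 + γ) := by field_simp

theorem two_mul_one_add_div_mul_sqrt_sub_one_lt {γ c w H : ℝ} (hγ : 0 ≤ γ) (hc : 0 < c)
    (hw : 4 * γ < w) (hwH : w ^ 2 ≤ 4 * (c * H) * (4 + w)) :
    2 * (1 + γ) / c * (Real.sqrt (1 + (γ / (1 + γ)) ^ 2) - 1) < H := by
  have hcH := sq_div_one_add_lt_of_sq_le hγ hw hwH
  calc 2 * (1 + γ) / c * (Real.sqrt (1 + (γ / (1 + γ)) ^ 2) - 1)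
      = 2 * (1 + γ) * (Real.sqrt (1 + (γ / (1 + γ)) ^ 2) - 1) / c := by ring
    _ ≤ γ ^ 2 / (1 + γ) / c := by gcongr; exact two_mul_one_add_mul_sqrt_sub_one_le hγ
    _ < H := by rw [div_lt_iff₀ hc]; linarith

theorem stmt_11_general (T γ : ℝ) (hT : 0 < T) (hγ : γ ∈ Set.Icc (0 : ℝ) 1)
    (Φ : Lp ℂ 2 (volume : Measure ℝ) →L[ℂ] Lp ℂ 2 (volume : Measure ℝ))
    (hΦ : 0 < ‖Φ‖)
    (u h : ℝ → Lp ℂ 2 (volume : Measure ℝ))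
    (hu : Continuous u)
    (hh : IntervalIntegrable (fun s => ‖h s‖ ^ 2) volume 0 T)
    (hident : ∀ t ∈ Set.Icc (0 : ℝ) T,
      ‖u t‖ ^ 2 - ‖u 0‖ ^ 2 =
        2 * ((-Complex.I) * ∫ s in (0 : ℝ)..t, (inner ℂ (u s) (Φ (h s)) : ℂ)).re)
    (hu0 : ‖u 0‖ ^ 2 = 4) (huT : ‖u T‖ ^ 2 < 4 * (1 - γ)) :
    2 * (1 + γ) / (T * ‖Φ‖ ^ 2) * (Real.sqrt (1 + (γ / (1 + γ)) ^ 2) - 1) <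
      ∫ s in (0 : ℝ)..T, ‖h s‖ ^ 2 := by
  obtain ⟨hγ₀, -⟩ := hγ
  set K := ‖Φ‖
  set D := ∫ s in (0 : ℝ)..T, ‖u s‖ * ‖h s‖
  have hu₀ : 0 ≤ fun s => ‖u s‖ := fun _ => norm_nonneg _
  have hh₀ : 0 ≤ fun s => ‖h s‖ := fun _ => norm_nonneg _
  have hu₂ : IntervalIntegrable (fun s => ‖u s‖ ^ 2) volume 0 T :=
    (hu.norm.pow 2).intervalIntegrable 0 T
  have henergy : ∀ t ∈ Set.Icc 0 T, |‖u t‖ ^ 2 - 4| ≤ 2 * K * D := by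
    rintro t ⟨ht₀, htT⟩
    rw [← hu0, hident t ⟨ht₀, htT⟩, abs_mul, abs_two, mul_assoc]
    gcongr
    simpa using (Complex.abs_im_le_norm _).trans <| norm_intervalIntegral_inner_le Φ u h ht₀ htT
      (.mul_of_integrable_sq hT.le hu₀ hh₀ hu₂ hh)
  have hγD : 4 * γ < 2 * K * D := by
    linarith [(abs_le.1 (henergy T ⟨hT.le, le_rfl⟩)).1]
  have hA : ∫ s in (0 : ℝ)..T, ‖u s‖ ^ 2 ≤ (4 + 2 * K * D) * T := by
    calc ∫ s in (0 : ℝ)..T, ‖u s‖ ^ 2 ≤ ∫ _ in (0 : ℝ)..T, (4 + 2 * K * D) :=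
          intervalIntegral.integral_mono_on hT.le hu₂ intervalIntegrable_const fun t ht => by
            linarith [(abs_le.1 (henergy t ht)).2]
      _ = (4 + 2 * K * D) * T := by
          rw [intervalIntegral.integral_const, smul_eq_mul, sub_zero, mul_comm]
  have hH : 0 ≤ ∫ s in (0 : ℝ)..T, ‖h s‖ ^ 2 :=
    intervalIntegral.integral_nonneg hT.le fun _ _ => sq_nonneg _
  refine two_mul_one_add_div_mul_sqrt_sub_one_lt hγ₀ (by positivity) hγD ?_
  calc (2 * K * D) ^ 2 = 4 * K ^ 2 * D ^ 2 := by ring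
    _ ≤ 4 * K ^ 2 * ((4 + 2 * K * D) * T * ∫ s in (0 : ℝ)..T, ‖h s‖ ^ 2) := by
        gcongr
        exact (sq_intervalIntegral_mul_le hT.le hu₀ hh₀ hu₂ hh).trans
          (mul_le_mul_of_nonneg_right hA hH)
    _ = 4 * (T * K ^ 2 * ∫ s in (0 : ℝ)..T, ‖h s‖ ^ 2) * (4 + 2 * K * D) := by ring

/-- Second upper bound of Proposition 7: if `u : [0,T] → L²(ℝ)` and
`h ∈ L²(0,T;L²(ℝ))` satisfy the momentum identity
`‖u(t)‖² - ‖u(0)‖² = 2 Re(-i ∫₀ᵗ (u(s), Φh(s)) ds)`, with `‖u(0)‖² = 4` and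
`‖u(T)‖² < 4(1-γ)`, then
`‖h‖² > (2(1+γ)/(T‖Φ‖²)) (√(1+(γ/(1+γ))²) - 1)`. -/
theorem stmt_11 (T γ : ℝ) (hT : 0 < T) (hγ : γ ∈ Set.Icc (0 : ℝ) 1)
    (Φ : Lp ℂ 2 (volume : Measure ℝ) →L[ℂ] Lp ℂ 2 (volume : Measure ℝ))
    (hΦ : 0 < ‖Φ‖)
    (u h : ℝ → Lp ℂ 2 (volume : Measure ℝ))
    (hu : Continuous u)
    (hh : IntervalIntegrable (fun s => ‖h s‖ ^ 2) volume 0 T)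
    (hint : ∀ t ∈ Set.Icc (0 : ℝ) T,
      IntervalIntegrable (fun s => (inner ℂ (u s) (Φ (h s)) : ℂ)) volume 0 t)
    (hident : ∀ t ∈ Set.Icc (0 : ℝ) T,
      ‖u t‖ ^ 2 - ‖u 0‖ ^ 2 =
        2 * ((-Complex.I) * ∫ s in (0 : ℝ)..t, (inner ℂ (u s) (Φ (h s)) : ℂ)).re)
    (hu0 : ‖u 0‖ ^ 2 = 4) (huT : ‖u T‖ ^ 2 < 4 * (1 - γ)) :
    2 * (1 + γ) / (T * ‖Φ‖ ^ 2) * (Real.sqrt (1 + (γ / (1 + γ)) ^ 2) - 1) <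
      ∫ s in (0 : ℝ)..T, ‖h s‖ ^ 2 :=
  stmt_11_general T γ hT hγ Φ hΦ u h hu hh hident hu0 huT
end
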